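/- For natural numbers m ≥ 2 and n ≥ 1, the graph C_{m,n} has domination number 1, eternal domination number m + 1, and autonomous domination number m + n. -/

import Mathlib

open SimpleGraph

variable {V : Type*} [DecidableEq V]

/-- `S` is a dominating set of `G`. -/
def Dominates (G : SimpleGraph V) (S : Finset V) : Prop :=
  ∀ v : V, v ∈ S ∨ ∃ u ∈ S, G.Adj u v

/-- Dominating sets `S` and `S'` are adjacent: they differ by moving one
guard along an edge of `G`. -/
def AdjacentSets (G : SimpleGraph V) (S S' : Finset V) : Prop :=
  ∃ v v', v ∈ S ∧ v' ∉ S ∧ G.Adj v v' ∧ S' = insert v' (S.erase v)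

/-- `S` is a secure dominating set. -/
def SecureDominating (G : SimpleGraph V) (S : Finset V) : Prop :=
  Dominates G S ∧ ∀ v ∉ S, ∃ S', Dominates G S' ∧ AdjacentSets G S S' ∧ v ∈ S'

/-- An autonomously dominating family. -/
def AutFamily (G : SimpleGraph V) (F : Set (Finset V)) : Prop :=
  (∀ S ∈ F, Dominates G S) ∧
  (∀ S ∈ F, ∀ v ∉ S, ∃ S' ∈ F, AdjacentSets G S S' ∧ v ∈ S') ∧
  (∀ S ∈ F, ∀ S', Dominates G S' → AdjacentSets G S S' → S' ∈ F)

/-- An autonomously dominating set. -/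
def AutDomSet (G : SimpleGraph V) (S : Finset V) : Prop :=
  ∃ F, AutFamily G F ∧ S ∈ F

/-- The autonomous domination number. -/
noncomputable def autDomNum (G : SimpleGraph V) : ℕ :=
  sInf {k | ∃ S : Finset V, AutDomSet G S ∧ S.card = k}

/-- An eternally dominating family (no closure condition). -/
def EternalFamily (G : SimpleGraph V) (F : Set (Finset V)) : Prop :=
  (∀ S ∈ F, Dominates G S) ∧
  (∀ S ∈ F, ∀ v ∉ S, ∃ S' ∈ F, AdjacentSets G S S' ∧ v ∈ S')

/-- The eternal domination number. -/
noncomputable def eternalDomNum (G : SimpleGraph V) : ℕ :=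
  sInf {k | ∃ (F : Set (Finset V)) (S : Finset V),
    EternalFamily G F ∧ S ∈ F ∧ S.card = k}

/-- The domination number. -/
noncomputable def domNum (G : SimpleGraph V) : ℕ :=
  sInf {k | ∃ S : Finset V, Dominates G S ∧ S.card = k}

/-- The graph `C_{m,n}`: vertices `a_1, a_2` (`Sum.inl`), `b_1, …, b_m`
(`Sum.inr (Sum.inl _)`), `c_1, …, c_n` (`Sum.inr (Sum.inr _)`); each `a_i` is adjacent
to every other vertex, the `c`'s induce a complete subgraph, and there are no other
edges. -/
def graphC (m n : ℕ) : SimpleGraph (Fin 2 ⊕ Fin m ⊕ Fin n) :=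
  SimpleGraph.fromRel (fun x y => match x, y with
    | .inl _, _ => True
    | _, .inl _ => True
    | .inr (.inr _), .inr (.inr _) => True
    | _, _ => False)

/-!
In `C_{m,n}` the vertices `a_1, a_2` are universal, the `b`s form an independent set whose
neighbourhoods are `{a_1, a_2}`, and the other vertices form a clique.

A guard on each `b` plus one guard roaming the clique of non-`b` vertices defends eternally.
Conversely, an attack on an unguarded `b` is answered from outside the `b`s, so every eternal
configuration can be pushed to one of the same size covering all `b`s; the `b`s alone miss `c_1`.

Any `m + n` guards dominate: if neither `a_i` is guarded, the two unguarded vertices are the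
universal ones. So all such configurations form an autonomous family. Conversely, while `a_1`
stays guarded every configuration dominates, so by the closure condition the guards can be
rearranged freely, with `a_2` as a relay; with three unguarded vertices the family would contain a
configuration guarding `a_1` but none of `a_2, b_1, b_2`, and the attack on `b_1` would leave
`b_2` undefended.
-/

def IsUniversalVertex (G : SimpleGraph V) (a : V) : Prop :=
  ∀ x, x ≠ a → G.Adj a x

section General

variable {G : SimpleGraph V} {F : Set (Finset V)} {S T : Finset V} {a₀ a₁ b₀ b₁ u v : V}

theorem IsUniversalVertex.dominates (ha : IsUniversalVertex G a₀) (h : a₀ ∈ S) :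
    Dominates G S := fun x =>
  if hx : x = a₀ then .inl (hx ▸ h) else .inr ⟨a₀, h, ha x hx⟩

theorem card_insert_erase (hu : u ∈ S) (hv : v ∉ S) : (insert v (S.erase u)).card = S.card := by
  rw [Finset.card_insert_of_notMem fun h => hv (Finset.mem_of_mem_erase h),
    Finset.card_erase_add_one hu]

theorem adjacentSets_insert_erase (hu : u ∈ S) (hv : v ∉ S) (huv : G.Adj u v) :
    AdjacentSets G S (insert v (S.erase u)) :=
  ⟨u, v, hu, hv, huv, rfl⟩

theorem AdjacentSets.card_eq {S' : Finset V} (h : AdjacentSets G S S') : S'.card = S.card := by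
  obtain ⟨u, v, hu, hv, -, rfl⟩ := h
  exact card_insert_erase hu hv

theorem AdjacentSets.card_compl_eq [Fintype V] {S' : Finset V} (h : AdjacentSets G S S') :
    S'ᶜ.card = Sᶜ.card := by
  rw [Finset.card_compl, Finset.card_compl, h.card_eq]

theorem AdjacentSets.exists_adj_of_mem {S' : Finset V} (h : AdjacentSets G S S') (hvS : v ∉ S)
    (hvS' : v ∈ S') : ∃ u ∈ S, G.Adj u v ∧ S' = insert v (S.erase u) := by
  obtain ⟨u, v', hu, -, huv', rfl⟩ := h
  obtain rfl : v = v' := by simpa [hvS] using hvS'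
  exact ⟨u, hu, huv', rfl⟩

theorem domNum_eq_one (ha : IsUniversalVertex G a₀) : domNum G = 1 := by
  refine IsLeast.csInf_eq
    ⟨⟨{a₀}, ha.dominates (Finset.mem_singleton_self a₀), Finset.card_singleton a₀⟩, ?_⟩
  rintro _ ⟨S, hS, rfl⟩
  rcases hS a₀ with h | ⟨u, hu, -⟩
  exacts [Finset.card_pos.2 ⟨a₀, h⟩, Finset.card_pos.2 ⟨u, hu⟩]

theorem EternalFamily.exists_superset_of_isIndepSet (hF : EternalFamily G F) {I : Finset V}
    (hI : G.IsIndepSet I) (hS : S ∈ F) : ∃ T ∈ F, T.card = S.card ∧ I ⊆ T := by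
  induction hk : (I \ S).card using Nat.strong_induction_on generalizing S with
  | _ k ih =>
    by_cases hIS : I ⊆ S
    · exact ⟨S, hS, rfl, hIS⟩
    obtain ⟨b, hbI, hbS⟩ := Finset.not_subset.1 hIS
    obtain ⟨S', hS', hadj, hbS'⟩ := hF.2 S hS b hbS
    obtain ⟨u, hu, hub, rfl⟩ := hadj.exists_adj_of_mem hbS hbS'
    -- the guard answering an attack on `I` comes from outside `I`, so `I \ S` shrinks
    have huI : u ∉ I := fun huI => hI huI hbI hub.ne hub
    have hsub : I \ insert b (S.erase u) ⊂ I \ S := by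
      refine (Finset.ssubset_iff_of_subset fun x hx => ?_).2 ⟨b, by simp [hbI, hbS], by simp⟩
      simp only [Finset.mem_sdiff, Finset.mem_insert, Finset.mem_erase, not_or] at hx ⊢
      exact ⟨hx.1, fun hxS => hx.2.2 ⟨fun hxu => huI (hxu ▸ hx.1), hxS⟩⟩
    obtain ⟨T, hT, hTcard, hIT⟩ := ih _ (hk ▸ Finset.card_lt_card hsub) hS' rfl
    exact ⟨T, hT, hTcard.trans (card_insert_erase hu hbS), hIT⟩

theorem EternalFamily.card_lt_card (hF : EternalFamily G F) {I : Finset V} (hI : G.IsIndepSet I)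
    (hId : ¬Dominates G I) (hS : S ∈ F) : I.card < S.card := by
  obtain ⟨T, hT, hTS, hIT⟩ := hF.exists_superset_of_isIndepSet hI hS
  by_contra! h
  exact hId (Finset.eq_of_subset_of_card_le hIT (hTS ▸ h) ▸ hF.1 T hT)

theorem eternalFamily_insert_of_isClique_compl {I : Finset V} (hI : G.IsClique (↑I : Set V)ᶜ) :
    EternalFamily G {S | ∃ x ∉ I, S = insert x I} := by
  constructor
  · rintro _ ⟨x, hx, rfl⟩ v
    by_cases hv : v ∈ insert x I
    · exact .inl hv
    rw [Finset.mem_insert, not_or] at hv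
    exact .inr ⟨x, Finset.mem_insert_self x I, hI hx hv.2 (Ne.symm hv.1)⟩
  · rintro _ ⟨x, hx, rfl⟩ v hv
    have hv' := hv
    rw [Finset.mem_insert, not_or] at hv'
    have hadj := adjacentSets_insert_erase (Finset.mem_insert_self x I) hv
      (hI hx hv'.2 (Ne.symm hv'.1))
    rw [Finset.erase_insert hx] at hadj
    exact ⟨insert v I, ⟨v, hv'.2, rfl⟩, hadj, Finset.mem_insert_self v I⟩

theorem eternalDomNum_eq_card_add_one {I : Finset V} (hI : G.IsIndepSet I)
    (hIc : G.IsClique (↑I : Set V)ᶜ) (hId : ¬Dominates G I) : eternalDomNum G = I.card + 1 := by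
  obtain ⟨x, hx⟩ : ∃ x, x ∉ I := by
    by_contra! h
    exact hId fun v => .inl (h v)
  refine IsLeast.csInf_eq ⟨⟨_, insert x I, eternalFamily_insert_of_isClique_compl hIc,
    ⟨x, hx, rfl⟩, Finset.card_insert_of_notMem hx⟩, ?_⟩
  rintro _ ⟨F, S, hF, hS, rfl⟩
  exact hF.card_lt_card hI hId hS

theorem dominates_of_card_compl_eq_two [Fintype V] (ha : a₀ ≠ a₁)
    (ha₀ : IsUniversalVertex G a₀) (ha₁ : IsUniversalVertex G a₁) (hS : S.Nonempty)
    (hSc : Sᶜ.card = 2) : Dominates G S := by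
  intro x
  by_cases hx : x ∈ S
  · exact .inl hx
  by_cases h₀ : a₀ ∈ S
  · exact ha₀.dominates h₀ x
  by_cases h₁ : a₁ ∈ S
  · exact ha₁.dominates h₁ x
  obtain ⟨s, hs⟩ := hS
  have hsx : s ≠ x := ne_of_mem_of_not_mem hs hx
  have hSc' : Sᶜ = {a₀, a₁} := (Finset.eq_of_subset_of_card_le
    (by simp [Finset.insert_subset_iff, h₀, h₁]) (by rw [hSc, Finset.card_pair ha])).symm
  have hx' : x ∈ ({a₀, a₁} : Finset V) := hSc' ▸ Finset.mem_compl.2 hx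
  simp only [Finset.mem_insert, Finset.mem_singleton] at hx'
  rcases hx' with rfl | rfl
  exacts [.inr ⟨s, hs, (ha₀ s hsx).symm⟩, .inr ⟨s, hs, (ha₁ s hsx).symm⟩]

theorem autFamily_card_compl_eq_two [Fintype V] (ha : a₀ ≠ a₁) (ha₀ : IsUniversalVertex G a₀)
    (ha₁ : IsUniversalVertex G a₁) : AutFamily G {S | Dominates G S ∧ Sᶜ.card = 2} := by
  refine ⟨fun S hS => hS.1, ?_, fun S hS S' hS' hadj => ⟨hS', hadj.card_compl_eq.trans hS.2⟩⟩
  rintro S ⟨hS, hSc⟩ v hv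
  obtain ⟨u, hu, huv⟩ := (hS v).resolve_left hv
  have hadj := adjacentSets_insert_erase hu hv huv
  exact ⟨_, ⟨dominates_of_card_compl_eq_two ha ha₀ ha₁ (Finset.insert_nonempty _ _)
    (hadj.card_compl_eq.trans hSc), hadj.card_compl_eq.trans hSc⟩, hadj, Finset.mem_insert_self _ _⟩

theorem AutFamily.eternalFamily (hF : AutFamily G F) : EternalFamily G F :=
  ⟨hF.1, hF.2.1⟩

theorem AutFamily.insert_erase_mem_of_adj (hF : AutFamily G F) (ha₀ : IsUniversalVertex G a₀)
    (hS : S ∈ F) (h₀ : a₀ ∈ S) (hu : u ∈ S) (hu₀ : u ≠ a₀) (hv : v ∉ S) (huv : G.Adj u v) :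
    insert v (S.erase u) ∈ F :=
  hF.2.2 S hS _ (ha₀.dominates (Finset.mem_insert_of_mem (Finset.mem_erase.2 ⟨hu₀.symm, h₀⟩)))
    (adjacentSets_insert_erase hu hv huv)

/-- While a guard stays on the universal vertex `a₀`, the other universal vertex `a₁` serves as
a relay, so any guard may jump to any vertex. -/
theorem AutFamily.insert_erase_mem (hF : AutFamily G F) (ha : a₀ ≠ a₁)
    (ha₀ : IsUniversalVertex G a₀) (ha₁ : IsUniversalVertex G a₁) (hS : S ∈ F) (h₀ : a₀ ∈ S)
    (hu : u ∈ S) (hu₀ : u ≠ a₀) (hv : v ∉ S) : insert v (S.erase u) ∈ F := by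
  by_cases huv : G.Adj u v
  · exact hF.insert_erase_mem_of_adj ha₀ hS h₀ hu hu₀ hv huv
  have hu₁ : u ≠ a₁ := by
    rintro rfl
    exact huv (ha₁ v (ne_of_mem_of_not_mem hu hv).symm)
  have hv₁ : v ≠ a₁ := by
    rintro rfl
    exact huv (ha₁ u hu₁).symm
  by_cases h₁ : a₁ ∈ S
  · have hS₁ := hF.insert_erase_mem_of_adj ha₀ hS h₀ h₁ ha.symm hv (ha₁ v hv₁)
    have hS₂ := hF.insert_erase_mem_of_adj ha₀ hS₁ (by simp [h₀, ha])
      (by simp [hu, hu₁]) hu₀ (by simp [hv₁.symm]) (ha₁ u hu₁).symm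
    convert hS₂ using 1
    ext x
    simp only [Finset.mem_insert, Finset.mem_erase]
    grind
  · have hS₁ := hF.insert_erase_mem_of_adj ha₀ hS h₀ hu hu₀ h₁ (ha₁ u hu₁).symm
    have hS₂ := hF.insert_erase_mem_of_adj ha₀ hS₁ (by simp [h₀, ha, hu₀.symm])
      (Finset.mem_insert_self _ _) ha.symm (by simp [hv₁, hv]) (ha₁ v hv₁)
    rwa [Finset.erase_insert fun h => h₁ (Finset.mem_of_mem_erase h)] at hS₂

theorem AutFamily.mem_of_card_eq (hF : AutFamily G F) (ha : a₀ ≠ a₁)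
    (ha₀ : IsUniversalVertex G a₀) (ha₁ : IsUniversalVertex G a₁) (hS : S ∈ F) (h₀S : a₀ ∈ S)
    (h₀T : a₀ ∈ T) (hST : T.card = S.card) : T ∈ F := by
  induction hk : (S \ T).card using Nat.strong_induction_on generalizing S with
  | _ k ih =>
    by_cases hST' : S ⊆ T
    · rwa [← Finset.eq_of_subset_of_card_le hST' hST.le]
    obtain ⟨u, hu, huT⟩ := Finset.not_subset.1 hST'
    obtain ⟨v, hv⟩ : (T \ S).Nonempty := by
      rw [← Finset.card_pos, ← Finset.card_sdiff_comm hST.symm]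
      exact Finset.card_pos.2 ⟨u, Finset.mem_sdiff.2 ⟨hu, huT⟩⟩
    rw [Finset.mem_sdiff] at hv
    have hu₀ : u ≠ a₀ := (ne_of_mem_of_not_mem h₀T huT).symm
    have hsub : insert v (S.erase u) \ T ⊂ S \ T := by
      refine (Finset.ssubset_iff_of_subset fun x hx => ?_).2
        ⟨u, by simp [hu, huT], by simp [ne_of_mem_of_not_mem hu hv.2]⟩
      simp only [Finset.mem_sdiff, Finset.mem_insert, Finset.mem_erase] at hx ⊢
      rcases hx with ⟨rfl | ⟨-, hxS⟩, hxT⟩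
      exacts [absurd hv.1 hxT, ⟨hxS, hxT⟩]
    exact ih _ (hk ▸ Finset.card_lt_card hsub) (hF.insert_erase_mem ha ha₀ ha₁ hS h₀S hu hu₀ hv.2)
      (by simp [hu₀.symm, h₀S]) (by rw [card_insert_erase hu hv.2, hST]) rfl

/-- Without a guard on `a₁`, an attack on `b₀` must be answered from `a₀`, which leaves `b₁`
undominated. -/
theorem EternalFamily.mem_of_notMem_of_notMem (hF : EternalFamily G F) (hb : b₀ ≠ b₁)
    (hab : a₁ ≠ b₀) (hb₀ : ∀ x, G.Adj x b₀ → x = a₀ ∨ x = a₁)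
    (hb₁ : ∀ x, G.Adj x b₁ → x = a₀ ∨ x = a₁) (hS : S ∈ F) (hb₀S : b₀ ∉ S) (hb₁S : b₁ ∉ S) :
    a₁ ∈ S := by
  by_contra h₁
  obtain ⟨S', hS', hadj, hb₀S'⟩ := hF.2 S hS b₀ hb₀S
  obtain ⟨u, hu, hub, rfl⟩ := hadj.exists_adj_of_mem hb₀S hb₀S'
  obtain rfl : u = a₀ := (hb₀ u hub).resolve_right fun h => h₁ (h ▸ hu)
  rcases hF.1 _ hS' b₁ with h | ⟨w, hw, hwb⟩
  · simp [hb.symm, hb₁S] at h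
  · rcases hb₁ w hwb with rfl | rfl
    · simp [ne_of_mem_of_not_mem hu hb₀S] at hw
    · simp [hab, h₁] at hw

theorem AutFamily.card_compl_le_two [Fintype V] (hF : AutFamily G F)
    (hab : [a₀, a₁, b₀, b₁].Nodup)
    (ha₀ : IsUniversalVertex G a₀) (ha₁ : IsUniversalVertex G a₁)
    (hb₀ : ∀ x, G.Adj x b₀ → x = a₀ ∨ x = a₁) (hb₁ : ∀ x, G.Adj x b₁ → x = a₀ ∨ x = a₁)
    (hS : S ∈ F) : Sᶜ.card ≤ 2 := by
  simp only [List.nodup_cons, List.mem_cons, List.not_mem_nil, or_false, not_or,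
    not_false_eq_true, List.nodup_nil, and_self, and_true] at hab
  obtain ⟨⟨ha, ha₀b₀, ha₀b₁⟩, ⟨ha₁b₀, -⟩, hb⟩ := hab
  by_contra! hSc
  rw [Finset.card_compl] at hSc
  obtain ⟨S₁, hS₁, h₀S₁, hS₁card⟩ : ∃ S₁ ∈ F, a₀ ∈ S₁ ∧ S₁.card = S.card := by
    by_cases h₀ : a₀ ∈ S
    · exact ⟨S, hS, h₀, rfl⟩
    obtain ⟨S₁, hS₁, hadj, h₀S₁⟩ := hF.2.1 S hS a₀ h₀
    exact ⟨S₁, hS₁, h₀S₁, hadj.card_eq⟩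
  have hS₁pos := Finset.card_pos.2 ⟨a₀, h₀S₁⟩
  obtain ⟨R, hR, hRcard⟩ := Finset.exists_subset_card_eq (s := ({a₀, a₁, b₀, b₁} : Finset V)ᶜ)
    (n := S.card - 1) (by
      have := Finset.card_le_four (a := a₀) (b := a₁) (c := b₀) (d := b₁)
      rw [Finset.card_compl]
      omega)
  have hRout : ∀ x ∈ ({a₀, a₁, b₀, b₁} : Finset V), x ∉ R := fun x hx hxR =>
    Finset.mem_compl.1 (hR hxR) hx
  have hstar : insert a₀ R ∈ F :=
    hF.mem_of_card_eq ha ha₀ ha₁ hS₁ h₀S₁ (Finset.mem_insert_self _ _) (by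
      rw [Finset.card_insert_of_notMem (hRout a₀ (by simp)), hRcard, hS₁card]
      omega)
  have := hF.eternalFamily.mem_of_notMem_of_notMem hb ha₁b₀ hb₀ hb₁ hstar
    (by simp [Ne.symm ha₀b₀, hRout b₀]) (by simp [Ne.symm ha₀b₁, hRout b₁])
  simp [Ne.symm ha, hRout a₁] at this

theorem autDomNum_eq_card_sub_two [Fintype V] (hab : [a₀, a₁, b₀, b₁].Nodup)
    (ha₀ : IsUniversalVertex G a₀) (ha₁ : IsUniversalVertex G a₁)
    (hb₀ : ∀ x, G.Adj x b₀ → x = a₀ ∨ x = a₁) (hb₁ : ∀ x, G.Adj x b₁ → x = a₀ ∨ x = a₁) :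
    autDomNum G = Fintype.card V - 2 := by
  have hab' := hab
  simp only [List.nodup_cons, List.mem_cons, List.not_mem_nil, or_false, not_or,
    not_false_eq_true, List.nodup_nil, and_self, and_true] at hab'
  obtain ⟨⟨ha, ha₀b₀, ha₀b₁⟩, -, hb⟩ := hab'
  refine IsLeast.csInf_eq ⟨⟨{b₀, b₁}ᶜ, ⟨_, autFamily_card_compl_eq_two ha ha₀ ha₁,
    ha₀.dominates (by simp [ha₀b₀, ha₀b₁]), by rw [compl_compl, Finset.card_pair hb]⟩,
    by rw [Finset.card_compl, Finset.card_pair hb]⟩, ?_⟩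
  rintro _ ⟨S, ⟨F, hF, hSF⟩, rfl⟩
  have := hF.card_compl_le_two hab ha₀ ha₁ hb₀ hb₁ hSF
  rw [Finset.card_compl] at this
  omega

end General

section GraphC

variable {m n : ℕ}

def bVertices (m n : ℕ) : Finset (Fin 2 ⊕ Fin m ⊕ Fin n) :=
  Finset.univ.map (Function.Embedding.inl.trans Function.Embedding.inr)

theorem mem_bVertices {x : Fin 2 ⊕ Fin m ⊕ Fin n} :
    x ∈ bVertices m n ↔ ∃ j, x = .inr (.inl j) := by
  simp [bVertices, eq_comm]

theorem card_bVertices : (bVertices m n).card = m := by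
  simp [bVertices]

theorem graphC_isUniversalVertex_inl (i : Fin 2) : IsUniversalVertex (graphC m n) (.inl i) :=
  fun x hx => by simp [graphC, Ne.symm hx]

theorem graphC_eq_inl_of_adj_inr_inl {j : Fin m} {x : Fin 2 ⊕ Fin m ⊕ Fin n}
    (h : (graphC m n).Adj x (.inr (.inl j))) : x = .inl 0 ∨ x = .inl 1 := by
  rcases x with i | j | k
  · fin_cases i <;> simp
  all_goals simp [graphC] at h

theorem graphC_isIndepSet_bVertices : (graphC m n).IsIndepSet (bVertices m n) := by
  intro x hx y hy _ hxy
  obtain ⟨j, rfl⟩ := mem_bVertices.1 hy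
  obtain ⟨i, rfl⟩ := mem_bVertices.1 hx
  rcases graphC_eq_inl_of_adj_inr_inl hxy with h | h <;> simp at h

theorem graphC_isClique_compl_bVertices : (graphC m n).IsClique (↑(bVertices m n))ᶜ := by
  intro x hx y hy hxy
  simp only [Set.mem_compl_iff, Finset.mem_coe, mem_bVertices, not_exists] at hx hy
  rcases x with i | j | k <;> rcases y with i' | j' | k' <;> simp_all [graphC]

theorem graphC_not_dominates_bVertices (hn : 1 ≤ n) :
    ¬Dominates (graphC m n) (bVertices m n) := by
  intro h
  rcases h (.inr (.inr ⟨0, hn⟩)) with h | ⟨u, hu, hadj⟩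
  · simp [mem_bVertices] at h
  · obtain ⟨j, rfl⟩ := mem_bVertices.1 hu
    simp [graphC] at hadj

end GraphC

/-- for `m ≥ 2` and `n ≥ 1`, `γ(C_{m,n}) = 1`, `γ_∞(C_{m,n}) = m + 1`
and `γ_aut(C_{m,n}) = m + n`. -/
theorem graphC_parameters (m n : ℕ) (hm : 2 ≤ m) (hn : 1 ≤ n) :
    domNum (graphC m n) = 1 ∧ eternalDomNum (graphC m n) = m + 1 ∧
    autDomNum (graphC m n) = m + n := by
  refine ⟨domNum_eq_one (graphC_isUniversalVertex_inl 0), ?_, ?_⟩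
  · rw [eternalDomNum_eq_card_add_one graphC_isIndepSet_bVertices graphC_isClique_compl_bVertices
      (graphC_not_dominates_bVertices hn), card_bVertices]
  · rw [autDomNum_eq_card_sub_two (a₀ := .inl 0) (a₁ := .inl 1)
      (b₀ := .inr (.inl ⟨0, Nat.zero_lt_of_lt hm⟩)) (b₁ := .inr (.inl ⟨1, hm⟩)) (by simp)
      (graphC_isUniversalVertex_inl 0) (graphC_isUniversalVertex_inl 1)
      (fun _ => graphC_eq_inl_of_adj_inr_inl) (fun _ => graphC_eq_inl_of_adj_inr_inl)]
    simp
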